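/- Let p be an odd prime, q = p^s, F = GF(q). In the code of the Type II ℓ=3 graph P(p,s) over GF(p), the vector taking value 1 at r and at each (x,t) with t ∈ F \ {−1}, value −1 at each (y,y) with y ∈ F, and value 0 elsewhere, is a codeword of Hamming weight 2q. Consequently the minimum distance d_min of this p-ary code satisfies q + 2 ≤ d_min ≤ 2q. -/

import Mathlib

open scoped Classical

namespace TypeII3

/-- Variable nodes of the Type II ℓ=3 graph: the root `r`, the nodes `(x,j)` (j ∈ F, with
`x` a formal symbol), and the nodes `(i,j)` (i, j ∈ F). -/
abbrev VN (F : Type*) := Unit ⊕ (F ⊕ (F × F))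

/-- Constraint nodes of the Type II ℓ=3 graph: `c_x`, the nodes `c_i` (i ∈ F), and the
nodes `(a,b)'` (a, b ∈ F). -/
abbrev CN (F : Type*) := Unit ⊕ (F ⊕ (F × F))

/-- Adjacency of the Type II ℓ=3 graph `P(p,s)`:
`r ~ c_x`; `r ~ c_i`; `c_x ~ (x,j)`; `c_i ~ (i,j)`; `(x,j) ~ (j,b)'` for every `b`; and
`(i,j) ~ (a, j + i·a)'` for every `a`. -/
def adj (F : Type*) [Field F] : VN F → CN F → Prop
  | Sum.inl _, Sum.inl _ => True                             -- r ~ c_x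
  | Sum.inl _, Sum.inr (Sum.inl _) => True                   -- r ~ c_i
  | Sum.inl _, Sum.inr (Sum.inr _) => False
  | Sum.inr (Sum.inl _), Sum.inl _ => True                   -- (x,j) ~ c_x
  | Sum.inr (Sum.inl _), Sum.inr (Sum.inl _) => False
  | Sum.inr (Sum.inl j), Sum.inr (Sum.inr (a, _)) => a = j   -- (x,j) ~ (j,b)'
  | Sum.inr (Sum.inr _), Sum.inl _ => False
  | Sum.inr (Sum.inr (i, _)), Sum.inr (Sum.inl k) => k = i   -- c_i ~ (i,j)
  | Sum.inr (Sum.inr (i, j)), Sum.inr (Sum.inr (a, b)) => b = j + i * a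

end TypeII3

/-- Hamming weight of a vector: the number of nonzero coordinates. -/
noncomputable def hamWt {V K : Type*} [Zero K] (x : V → K) : ℕ :=
  Nat.card {v : V // x v ≠ 0}

namespace TypeII3

/-- The code of the Type II ℓ=3 graph over `K`. -/
def InCode (F : Type*) [Field F] [Fintype F] (K : Type*) [AddCommMonoid K]
    (x : VN F → K) : Prop :=
  ∀ c : CN F, (∑ v : VN F, if adj F v c then x v else 0) = 0

/-- The minimum distance of the code of the Type II ℓ=3 graph over `K`. -/
noncomputable def dmin (F : Type*) [Field F] [Fintype F]
    (K : Type*) [AddCommMonoid K] : ℕ :=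
  sInf {w | ∃ x : VN F → K, InCode F K x ∧ x ≠ 0 ∧ hamWt x = w}

end TypeII3

/-- The vector over GF(p) taking value 1 at `r` and at each `(x,t)` with `t ≠ −1`,
value −1 at each `(y,y)`, and value 0 elsewhere. -/
noncomputable def cw (p : ℕ) (F : Type*) [Field F] : TypeII3.VN F → ZMod p
  | Sum.inl _ => 1
  | Sum.inr (Sum.inl t) => if t = -1 then 0 else 1
  | Sum.inr (Sum.inr (i, j)) => if j = i then -1 else 0

/-! Each check of `cw` sees either a single `1` and a single `-1` (the line `j + i a = b` with
`a ≠ -1` meets the diagonal exactly once), or, besides zeros, `q ≡ 0` equal entries.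

For the lower bound take a nonzero codeword `w`. If `w r ≠ 0`, every row check `c_i` forces a
support point in row `i`, and `c_x` a support point `(x,t)`. If `w r = 0` but `w (x,a) ≠ 0`,
`c_x` forces a second `(x,a')`, and each of the `q` parallel lines `j + i a = b` carries a
support point. Otherwise a support point `(i₀,j₀)` has a second one in its row, and each of the
`q` lines through `(i₀,j₀)` carries one outside row `i₀`; distinct such lines meet only at
`(i₀,j₀)`. -/

open Finset

theorem card_add_two_le_hamWt_of_injective {V α M : Type*} [Fintype V] [Fintype α] [Zero M]
    {x : V → M} {v₁ v₂ : V} (g : α → V) (hg : Function.Injective g) (h₁₂ : v₁ ≠ v₂)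
    (hg₁ : ∀ a, g a ≠ v₁) (hg₂ : ∀ a, g a ≠ v₂) (hx₁ : x v₁ ≠ 0) (hx₂ : x v₂ ≠ 0)
    (hxg : ∀ a, x (g a) ≠ 0) : Fintype.card α + 2 ≤ hamWt x := by
  rw [hamWt, Nat.card_eq_fintype_card, Fintype.card_subtype]
  calc Fintype.card α + 2 = (insert v₁ (insert v₂ (univ.image g))).card := by
        rw [card_insert_of_notMem, card_insert_of_notMem, card_image_of_injective _ hg, card_univ]
        · simpa using hg₂
        · simpa [h₁₂] using hg₁
    _ ≤ (univ.filter fun v => x v ≠ 0).card := by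
        refine card_le_card fun v hv => ?_
        simp only [mem_insert, mem_image, mem_univ, true_and] at hv
        rcases hv with rfl | rfl | ⟨a, -, rfl⟩ <;> simp [hx₁, hx₂, hxg]

section

variable {ι M : Type*} [Fintype ι] [AddCommMonoid M]

theorem exists_ne_zero_of_add_sum_eq_zero {a : M} {f : ι → M}
    (h : a + ∑ i, f i = 0) (ha : a ≠ 0) : ∃ i, f i ≠ 0 := by
  by_contra! hf
  simp only [hf, sum_const_zero, add_zero] at h
  exact ha h

theorem exists_ne_ne_zero_of_sum_eq_zero {f : ι → M}
    (h : ∑ i, f i = 0) {i₀ : ι} (hi₀ : f i₀ ≠ 0) : ∃ i ≠ i₀, f i ≠ 0 := by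
  by_contra! hf
  rw [Fintype.sum_eq_single i₀ hf] at h
  exact hi₀ h

end

namespace TypeII3

variable {F : Type*} [Field F] {K : Type*} [AddCommMonoid K]

abbrev root : VN F := Sum.inl ()

abbrev xNode (j : F) : VN F := Sum.inr (Sum.inl j)

abbrev pt (i j : F) : VN F := Sum.inr (Sum.inr (i, j))

abbrev rowCheck (i : F) : CN F := Sum.inr (Sum.inl i)

abbrev lineCheck (a b : F) : CN F := Sum.inr (Sum.inr (a, b))

@[simp] theorem adj_xNode_line (j a b : F) : adj F (xNode j) (lineCheck a b) ↔ a = j :=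
  Iff.rfl

@[simp] theorem adj_pt_row (i j k : F) : adj F (pt i j) (rowCheck k) ↔ k = i :=
  Iff.rfl

@[simp] theorem adj_pt_line (i j a b : F) :
    adj F (pt i j) (lineCheck a b) ↔ j = b - i * a := by
  rw [eq_sub_iff_add_eq, eq_comm]
  rfl

theorem cw_ne_zero {p : ℕ} [Nontrivial (ZMod p)] : cw p F ≠ 0 :=
  fun h => one_ne_zero (congrFun h root)

variable [Fintype F]

theorem inCode_iff (x : VN F → K) :
    InCode F K x ↔ x root + ∑ j, x (xNode j) = 0 ∧ (∀ i, x root + ∑ j, x (pt i j) = 0) ∧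
      ∀ a b, x (xNode a) + ∑ i, x (pt i (b - i * a)) = 0 := by
  simp only [InCode, Sum.forall, Prod.forall, Fintype.sum_sum_type, Fintype.sum_prod_type,
    adj_xNode_line, adj_pt_row, adj_pt_line]
  simp [adj]

variable {x : VN F → K}

theorem card_add_two_le_hamWt_of_root_ne_zero (hx : InCode F K x) (hr : x root ≠ 0) :
    Fintype.card F + 2 ≤ hamWt x := by
  obtain ⟨hcX, hcRow, -⟩ := (inCode_iff x).1 hx
  obtain ⟨t, ht⟩ := exists_ne_zero_of_add_sum_eq_zero hcX hr
  choose g hg using fun i => exists_ne_zero_of_add_sum_eq_zero (hcRow i) hr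
  refine card_add_two_le_hamWt_of_injective (fun i => pt i (g i)) (fun i i' h => ?_)
    (by simp) (by simp) (by simp) hr ht hg
  simp only [Sum.inr.injEq, Prod.mk.injEq] at h
  exact h.1

theorem card_add_two_le_hamWt_of_xNode_ne_zero (hx : InCode F K x) (hr : x root = 0) {a : F}
    (ha : x (xNode a) ≠ 0) : Fintype.card F + 2 ≤ hamWt x := by
  obtain ⟨hcX, -, hcLine⟩ := (inCode_iff x).1 hx
  rw [hr, zero_add] at hcX
  obtain ⟨a', ha'a, ha'⟩ := exists_ne_ne_zero_of_sum_eq_zero hcX ha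
  choose g hg using fun b => exists_ne_zero_of_add_sum_eq_zero (hcLine a b) ha
  refine card_add_two_le_hamWt_of_injective (fun b => pt (g b) (b - g b * a)) (fun b b' h => ?_)
    (by simpa using ha'a.symm) (by simp) (by simp) ha ha' hg
  simp only [Sum.inr.injEq, Prod.mk.injEq] at h
  obtain ⟨hgg, hb⟩ := h
  rw [hgg] at hb
  simpa using hb

theorem card_add_two_le_hamWt_of_pt_ne_zero (hx : InCode F K x) (hr : x root = 0)
    (hX : ∀ a, x (xNode a) = 0) {i₀ j₀ : F} (h₀ : x (pt i₀ j₀) ≠ 0) :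
    Fintype.card F + 2 ≤ hamWt x := by
  obtain ⟨-, hcRow, hcLine⟩ := (inCode_iff x).1 hx
  have hrow := hcRow i₀
  rw [hr, zero_add] at hrow
  obtain ⟨j₁, hj₁, hx₁⟩ := exists_ne_ne_zero_of_sum_eq_zero hrow h₀
  have hline (a : F) : ∃ i ≠ i₀, x (pt i (j₀ + i₀ * a - i * a)) ≠ 0 := by
    have h := hcLine a (j₀ + i₀ * a)
    rw [hX a, zero_add] at h
    exact exists_ne_ne_zero_of_sum_eq_zero h (by simpa using h₀)
  choose g hgi₀ hg using hline
  refine card_add_two_le_hamWt_of_injective (fun a => pt (g a) (j₀ + i₀ * a - g a * a))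
    (fun a a' h => ?_) (by simpa using hj₁.symm) (fun a => by simp [hgi₀ a])
    (fun a => by simp [hgi₀ a]) h₀ hx₁ hg
  simp only [Sum.inr.injEq, Prod.mk.injEq] at h
  obtain ⟨hgg, ha⟩ := h
  rw [← hgg] at ha
  have hslope : (i₀ - g a) * a = (i₀ - g a) * a' := by linear_combination ha
  exact mul_left_cancel₀ (sub_ne_zero.2 (hgi₀ a).symm) hslope

theorem card_add_two_le_hamWt (hx : InCode F K x) (hx₀ : x ≠ 0) :
    Fintype.card F + 2 ≤ hamWt x := by
  by_cases hr : x root = 0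
  · by_cases hX : ∃ a, x (xNode a) ≠ 0
    · obtain ⟨a, ha⟩ := hX
      exact card_add_two_le_hamWt_of_xNode_ne_zero hx hr ha
    push Not at hX
    obtain ⟨⟨i, j⟩, hij⟩ : ∃ q : F × F, x (Sum.inr (Sum.inr q)) ≠ 0 := by
      by_contra! hpt
      exact hx₀ (funext <| by rintro (_ | a | q) <;> simp [hr, hX, hpt])
    exact card_add_two_le_hamWt_of_pt_ne_zero hx hr hX hij
  · exact card_add_two_le_hamWt_of_root_ne_zero hx hr

variable {p : ℕ}

theorem inCode_cw (hq : (Fintype.card F : ZMod p) = 0) : InCode F (ZMod p) (cw p F) := by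
  rw [inCode_iff]
  refine ⟨?_, fun i => by simp [cw], fun a b => ?_⟩
  · simp [cw, sum_ite, filter_ne', card_erase_of_mem,
      Nat.cast_pred Fintype.card_pos, hq]
  by_cases ha : a = -1
  · subst ha
    simp [cw, hq]
  have h1a : 1 + a ≠ 0 := fun h => ha (eq_neg_of_add_eq_zero_right h)
  have hsol (i : F) : b - i * a = i ↔ i = b / (1 + a) := by
    rw [eq_div_iff h1a, sub_eq_iff_eq_add]
    constructor <;> intro h <;> linear_combination -h
  simp [cw, ha, hsol]

theorem hamWt_cw [Nontrivial (ZMod p)] : hamWt (cw p F) = 2 * Fintype.card F := by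
  rw [hamWt, Nat.card_eq_fintype_card, Fintype.card_subtype, card_filter,
    Fintype.sum_sum_type, Fintype.sum_sum_type, Fintype.sum_prod_type]
  have := Fintype.card_pos (α := F)
  simp [cw, sum_ite, filter_ne', card_erase_of_mem]
  omega

end TypeII3

theorem stmt_11_general (p s : ℕ) (hp : p.Prime) (hs : 0 < s)
    (F : Type*) [Field F] [Fintype F] (hF : Fintype.card F = p ^ s) :
    -- the given vector is a codeword of the p-ary code of P(p,s)
    TypeII3.InCode F (ZMod p) (cw p F) ∧
    -- of Hamming weight 2q
    hamWt (cw p F) = 2 * p ^ s ∧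
    -- consequently q + 2 ≤ d_min ≤ 2q
    p ^ s + 2 ≤ TypeII3.dmin F (ZMod p) ∧
    TypeII3.dmin F (ZMod p) ≤ 2 * p ^ s := by
  have : Fact p.Prime := ⟨hp⟩
  have hcode := TypeII3.inCode_cw (p := p) (F := F) (by simp [hF, hs.ne'])
  have hwt : hamWt (cw p F) = 2 * p ^ s := hF ▸ TypeII3.hamWt_cw
  have hmem : 2 * p ^ s ∈ {w | ∃ x, TypeII3.InCode F (ZMod p) x ∧ x ≠ 0 ∧ hamWt x = w} :=
    ⟨cw p F, hcode, TypeII3.cw_ne_zero, hwt⟩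
  refine ⟨hcode, hwt, le_csInf ⟨_, hmem⟩ ?_, Nat.sInf_le hmem⟩
  rintro w ⟨x, hx, hx₀, rfl⟩
  exact hF ▸ TypeII3.card_add_two_le_hamWt hx hx₀

theorem stmt_11 (p s : ℕ) (hp : p.Prime) (hodd : p ≠ 2) (hs : 0 < s)
    (F : Type*) [Field F] [Fintype F] (hF : Fintype.card F = p ^ s) :
    -- the given vector is a codeword of the p-ary code of P(p,s)
    TypeII3.InCode F (ZMod p) (cw p F) ∧
    -- of Hamming weight 2q
    hamWt (cw p F) = 2 * p ^ s ∧
    -- consequently q + 2 ≤ d_min ≤ 2q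
    p ^ s + 2 ≤ TypeII3.dmin F (ZMod p) ∧
    TypeII3.dmin F (ZMod p) ≤ 2 * p ^ s :=
  stmt_11_general p s hp hs F hF
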